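/- Let r ≥ 1 and k ≥ 1 be integers, and let E_1, …, E_{2k} be independent random variables each uniformly distributed on Z_{±r}. Let Ȳ = (1/k) · (E_1 + ⋯ + E_{2k}). Then Pr(|Ȳ| < 1/2) ≥ 1 − 8r(r+1)/(3k). -/

import Mathlib

open MeasureTheory ProbabilityTheory
open scoped ENNReal

/-!
Each `E i` has mean `0` and variance `(2r+1)⁻¹ ∑_{|x| ≤ r} x² = r(r+1)/3`, so by pairwise
independence the sum `S` of the `2k` variables has variance `2k · r(r+1)/3`. Since `|Ȳ| ≥ 1/2`
exactly when `|S| ≥ k/2`, Chebyshev's inequality bounds the failure probability by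
`2k · r(r+1)/3 / (k/2)² = 8r(r+1)/(3k)`.
-/

theorem sum_Icc_neg_natCast_succ (f : ℤ → ℝ) (n : ℕ) :
    ∑ x ∈ Finset.Icc (-((n + 1 : ℕ) : ℤ)) ((n + 1 : ℕ) : ℤ), f x =
      f (-((n : ℤ) + 1)) + f ((n : ℤ) + 1) + ∑ x ∈ Finset.Icc (-(n : ℤ)) n, f x := by
  have hIcc : Finset.Icc (-((n + 1 : ℕ) : ℤ)) ((n + 1 : ℕ) : ℤ) =
      insert (-((n : ℤ) + 1)) (insert ((n : ℤ) + 1) (Finset.Icc (-(n : ℤ)) n)) := by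
    ext x; simp only [Finset.mem_Icc, Finset.mem_insert]; omega
  rw [hIcc, Finset.sum_insert (by simp only [Finset.mem_insert, Finset.mem_Icc]; omega),
    Finset.sum_insert (by simp only [Finset.mem_Icc]; omega), add_assoc]

theorem sum_Icc_neg_natCast_id (n : ℕ) : ∑ x ∈ Finset.Icc (-(n : ℤ)) n, (x : ℝ) = 0 := by
  induction n with
  | zero => simp
  | succ n ih => rw [sum_Icc_neg_natCast_succ, ih]; push_cast; ring

theorem sum_Icc_neg_natCast_sq (n : ℕ) :
    ∑ x ∈ Finset.Icc (-(n : ℤ)) n, (x : ℝ) ^ 2 = n * (n + 1) * (2 * n + 1) / 3 := by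
  induction n with
  | zero => simp
  | succ n ih => rw [sum_Icc_neg_natCast_succ, ih]; push_cast; ring

theorem card_Icc_neg_natCast (n : ℕ) : (Finset.Icc (-(n : ℤ)) n).card = 2 * n + 1 := by
  rw [Int.card_Icc]; omega

section DiscreteLaw

variable {Ω α : Type*} [MeasurableSpace Ω] {μ : Measure Ω} [MeasurableSpace α]
  [DiscreteMeasurableSpace α] {X : Ω → α}

theorem ae_mem_of_sum_measure_eq_one [IsProbabilityMeasure μ] (hX : Measurable X) (s : Finset α)
    (h : ∑ x ∈ s, μ {ω | X ω = x} = 1) : ∀ᵐ ω ∂μ, X ω ∈ s := by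
  rw [ae_iff_measure_eq (p := fun ω => X ω ∈ s) (hX s.measurableSet).nullMeasurableSet,
    measure_univ, ← h]
  exact (sum_measure_preimage_singleton s fun x _ => hX (measurableSet_singleton x)).symm

theorem integral_comp_eq_sum_of_ae_mem [IsFiniteMeasure μ] (hX : Measurable X) {s : Finset α}
    (hs : ∀ᵐ ω ∂μ, X ω ∈ s) (g : α → ℝ) :
    ∫ ω, g (X ω) ∂μ = ∑ x ∈ s, μ.real {ω | X ω = x} * g x := by
  have hmap : (μ.map X).restrict s = μ.map X :=
    Measure.restrict_eq_self_of_ae_mem ((ae_map_iff hX.aemeasurable s.measurableSet).2 hs)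
  rw [← integral_map hX.aemeasurable (Measurable.of_discrete (f := g)).aestronglyMeasurable,
    ← hmap, setIntegral_finset s IntegrableOn.finset]
  simp only [map_measureReal_apply hX (measurableSet_singleton _), smul_eq_mul]
  rfl

end DiscreteLaw

section UniformIcc

variable {Ω : Type*} [MeasurableSpace Ω] {μ : Measure Ω} {X : Ω → ℤ} {r : ℕ}

def IsUniformOnIcc (X : Ω → ℤ) (r : ℕ) (μ : Measure Ω) : Prop :=
  ∀ x : ℤ, μ {ω | X ω = x} =
    if x ∈ Finset.Icc (-(r : ℤ)) r then (1 : ℝ≥0∞) / (2 * (r : ℝ≥0∞) + 1) else 0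

theorem IsUniformOnIcc.ae_mem_Icc [IsProbabilityMeasure μ] (hX : Measurable X)
    (hunif : IsUniformOnIcc X r μ) : ∀ᵐ ω ∂μ, X ω ∈ Finset.Icc (-(r : ℤ)) r := by
  refine ae_mem_of_sum_measure_eq_one hX _ ?_
  rw [Finset.sum_congr rfl fun x hx => (hunif x).trans (if_pos hx), Finset.sum_const,
    card_Icc_neg_natCast, nsmul_eq_mul]
  push_cast
  exact ENNReal.mul_div_cancel (by positivity) (by finiteness)

theorem IsUniformOnIcc.integral_comp [IsProbabilityMeasure μ] (hX : Measurable X)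
    (hunif : IsUniformOnIcc X r μ) (g : ℤ → ℝ) :
    ∫ ω, g (X ω) ∂μ = (∑ x ∈ Finset.Icc (-(r : ℤ)) r, g x) / (2 * r + 1) := by
  rw [integral_comp_eq_sum_of_ae_mem hX (hunif.ae_mem_Icc hX), Finset.sum_div]
  refine Finset.sum_congr rfl fun x hx => ?_
  rw [measureReal_def, hunif x, if_pos hx, ENNReal.toReal_div]
  have hc : (2 * (r : ℝ≥0∞) + 1).toReal = 2 * r + 1 := by exact_mod_cast ENNReal.toReal_natCast _
  simp [hc, inv_mul_eq_div]

theorem IsUniformOnIcc.integral_eq_zero [IsProbabilityMeasure μ] (hX : Measurable X)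
    (hunif : IsUniformOnIcc X r μ) : ∫ ω, (X ω : ℝ) ∂μ = 0 := by
  rw [hunif.integral_comp hX, sum_Icc_neg_natCast_id, zero_div]

theorem IsUniformOnIcc.memLp [IsProbabilityMeasure μ] (hX : Measurable X)
    (hunif : IsUniformOnIcc X r μ) : MemLp (fun ω => (X ω : ℝ)) 2 μ := by
  refine MemLp.of_bound (Measurable.of_discrete.comp hX).aestronglyMeasurable r ?_
  filter_upwards [hunif.ae_mem_Icc hX] with ω hω
  rw [Finset.mem_Icc] at hω
  rw [Real.norm_eq_abs, abs_le]
  constructor <;> exact_mod_cast (by omega)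

theorem IsUniformOnIcc.variance_eq [IsProbabilityMeasure μ] (hX : Measurable X)
    (hunif : IsUniformOnIcc X r μ) : variance (fun ω => (X ω : ℝ)) μ = r * (r + 1) / 3 := by
  rw [variance_eq_sub (hunif.memLp hX), hunif.integral_eq_zero hX]
  have hsq := hunif.integral_comp hX fun x => (x : ℝ) ^ 2
  rw [sum_Icc_neg_natCast_sq] at hsq
  simp only [Pi.pow_apply, hsq]
  field_simp
  ring

end UniformIcc

theorem measure_le_abs_sum_le_sum_variance_div_sq {Ω ι : Type*} [MeasurableSpace Ω]
    {μ : Measure Ω} [IsFiniteMeasure μ] [Fintype ι] {X : ι → Ω → ℝ}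
    (hmem : ∀ i, MemLp (X i) 2 μ) (hmean : ∀ i, μ[X i] = 0)
    (hindep : Pairwise fun i j => X i ⟂ᵢ[μ] X j) {t : ℝ} (ht : 0 < t) :
    μ {ω | t ≤ |∑ i, X i ω|} ≤ ENNReal.ofReal ((∑ i, variance (X i) μ) / t ^ 2) := by
  have hsum_mean : μ[∑ i, X i] = 0 := by
    simp only [Finset.sum_apply]
    rw [integral_finsetSum _ fun i _ => (hmem i).integrable one_le_two]
    simp [hmean]
  have := meas_ge_le_variance_div_sq (memLp_finsetSum' Finset.univ fun i _ => hmem i) ht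
  rw [hsum_mean, IndepFun.variance_sum (fun i _ => hmem i) fun i _ j _ hij => hindep hij] at this
  simpa only [sub_zero, Finset.sum_apply] using this

theorem stmt10_general {Ω : Type*} [MeasurableSpace Ω] (μ : Measure Ω) [IsProbabilityMeasure μ]
    (r k : ℕ) (hk : 1 ≤ k)
    (E : Fin (2 * k) → Ω → ℤ)
    (hmeas : ∀ i, Measurable (E i))
    (hindep : iIndepFun E μ)
    (hunif : ∀ i, ∀ x : ℤ, μ {ω | E i ω = x} =
      if x ∈ Finset.Icc (-(r : ℤ)) r then (1 : ℝ≥0∞) / (2 * (r : ℝ≥0∞) + 1) else 0) :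
    (μ {ω | |(∑ i, (E i ω : ℝ)) / (k : ℝ)| < 1 / 2}).toReal
      ≥ 1 - 8 * (r : ℝ) * ((r : ℝ) + 1) / (3 * (k : ℝ)) := by
  have hk0 : (0 : ℝ) < k := by exact_mod_cast hk
  replace hunif : ∀ i, IsUniformOnIcc (E i) r μ := hunif
  have hcheb := measure_le_abs_sum_le_sum_variance_div_sq (X := fun i ω => (E i ω : ℝ))
    (fun i => (hunif i).memLp (hmeas i)) (fun i => (hunif i).integral_eq_zero (hmeas i))
    (fun i j hij => (hindep.indepFun hij).comp Measurable.of_discrete Measurable.of_discrete)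
    (half_pos hk0)
  have hbound : (∑ i, variance (fun ω => (E i ω : ℝ)) μ) / ((k : ℝ) / 2) ^ 2
      = 8 * (r : ℝ) * ((r : ℝ) + 1) / (3 * (k : ℝ)) := by
    simp only [fun i => (hunif i).variance_eq (hmeas i), Finset.sum_const, Finset.card_univ,
      Fintype.card_fin, nsmul_eq_mul]
    field_simp
    push_cast
    ring
  rw [hbound] at hcheb
  have hfar_le : μ.real {ω | (k : ℝ) / 2 ≤ |∑ i, (E i ω : ℝ)|} ≤ 8 * r * (r + 1) / (3 * k) :=
    ENNReal.toReal_le_of_le_ofReal (by positivity) hcheb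
  have hcover : μ.real Set.univ ≤ μ.real {ω | |(∑ i, (E i ω : ℝ)) / (k : ℝ)| < 1 / 2}
      + μ.real {ω | (k : ℝ) / 2 ≤ |∑ i, (E i ω : ℝ)|} := by
    refine (measureReal_mono fun ω _ => ?_).trans (measureReal_union_le _ _)
    simp only [Set.mem_union, Set.mem_ofPred_eq]
    rw [abs_div, abs_of_pos hk0, div_lt_iff₀ hk0]
    rcases le_or_gt ((k : ℝ) / 2) |∑ i, (E i ω : ℝ)| with hfar | hnear
    · exact Or.inr hfar
    · exact Or.inl (by linarith)
  rw [probReal_univ] at hcover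
  change μ.real _ ≥ _
  linarith

/-- If `E₁, …, E_{2k}` are independent random variables, each uniform on
`Z_{±r}`, and `Ȳ = (1/k)(E₁ + ⋯ + E_{2k})`, then
`Pr(|Ȳ| < 1/2) ≥ 1 - 8r(r+1)/(3k)`. -/
theorem stmt10 {Ω : Type*} [MeasurableSpace Ω] (μ : Measure Ω) [IsProbabilityMeasure μ]
    (r k : ℕ) (hr : 1 ≤ r) (hk : 1 ≤ k)
    (E : Fin (2 * k) → Ω → ℤ)
    (hmeas : ∀ i, Measurable (E i))
    (hindep : iIndepFun E μ)
    (hunif : ∀ i, ∀ x : ℤ, μ {ω | E i ω = x} =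
      if x ∈ Finset.Icc (-(r : ℤ)) r then (1 : ℝ≥0∞) / (2 * (r : ℝ≥0∞) + 1) else 0) :
    (μ {ω | |(∑ i, (E i ω : ℝ)) / (k : ℝ)| < 1 / 2}).toReal
      ≥ 1 - 8 * (r : ℝ) * ((r : ℝ) + 1) / (3 * (k : ℝ)) :=
  stmt10_general μ r k hk E hmeas hindep hunif
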